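/- arXiv:2005.06322 — 2 statements merged into one kernel-verified Lean document; each statement's English description precedes it below -/
import Mathlib

section
/- If f is an unbounded modulus function and g is a weight function such that f(n)/f(g(n)) → ∞, then 𝒵_g(f) is a proper subset of 𝒵(f), where 𝒵(f) = {A ⊆ ℕ : limsup_n f(|A ∩ [1,n]|)/f(n) = 0}. -/
open Filter Set

/-- A modulus function: nonnegative, vanishing exactly at 0, subadditive,
non-decreasing, right continuous at 0 (all on `[0,∞)`). -/
def IsModulus (f : ℝ → ℝ) : Prop :=
  (∀ x : ℝ, 0 ≤ x → 0 ≤ f x) ∧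
  (∀ x : ℝ, 0 ≤ x → (f x = 0 ↔ x = 0)) ∧
  (∀ x y : ℝ, 0 ≤ x → 0 ≤ y → f (x + y) ≤ f x + f y) ∧
  (∀ x y : ℝ, 0 ≤ x → x ≤ y → f x ≤ f y) ∧
  ContinuousWithinAt f (Set.Ici 0) 0

/-- An unbounded modulus function. -/
def IsUnboundedModulus (f : ℝ → ℝ) : Prop :=
  IsModulus f ∧ Tendsto f atTop atTop

/-- A weight function `g : ℕ → [0,∞)` with `g n → ∞` and `n / g n ↛ 0`. -/
def IsWeight (g : ℕ → ℝ) : Prop :=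
  (∀ n, 0 ≤ g n) ∧ Tendsto g atTop atTop ∧
  ¬ Tendsto (fun n : ℕ => (n : ℝ) / g n) atTop (nhds 0)

open scoped Classical in
/-- `|A ∩ [1,n]|`. -/
noncomputable def cnt (A : Set ℕ) (n : ℕ) : ℕ :=
  ((Finset.Icc 1 n).filter (fun m => m ∈ A)).card

/-- The ideal `𝒵_g(f)` of sets whose `f`-density of weight `g` is zero
(for nonnegative sequences, `limsup = 0` is equivalent to convergence to `0`). -/
noncomputable def Zd (f : ℝ → ℝ) (g : ℕ → ℝ) : Set (Set ℕ) :=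
  {A | Tendsto (fun n => f (cnt A n) / f (g n)) atTop (nhds 0)}

/-!
The inclusion holds because `f (g n) / f n → 0`. For strictness choose a very sparse sequence
`a k` and let `A` be the set whose counting function climbs with slope one to height
`⌈g (a k)⌉` exactly at time `a k` and is flat in between. At the times `a k` the `g`-density of
`A` is at least `1`. On the other hand `f ⌈g m⌉ / f m → 0`, so on a flat stretch after `a k` the
ratio `f (|A ∩ [1, n]|) / f n` is at most `f ⌈g (a k)⌉ / f (a k)`, and on the ramp before
`a (k + 1)`, which is short compared with `a (k + 1)`, subadditivity gives
`f n ≥ f (a (k + 1)) - f ⌈g (a (k + 1))⌉`.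
-/

open Topology

namespace IsModulus

variable {f : ℝ → ℝ} (hf : IsModulus f)
include hf

theorem nonneg {x : ℝ} (hx : 0 ≤ x) : 0 ≤ f x := hf.1 x hx

theorem pos {x : ℝ} (hx : 0 < x) : 0 < f x :=
  (hf.nonneg hx.le).lt_of_ne fun h => hx.ne' ((hf.2.1 x hx.le).1 h.symm)

theorem mono {x y : ℝ} (hx : 0 ≤ x) (hxy : x ≤ y) : f x ≤ f y := hf.2.2.2.1 x y hx hxy

theorem add_le {x y : ℝ} (hx : 0 ≤ x) (hy : 0 ≤ y) : f (x + y) ≤ f x + f y :=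
  hf.2.2.1 x y hx hy

theorem natCast_mono {m n : ℕ} (h : m ≤ n) : f m ≤ f n :=
  hf.mono m.cast_nonneg (Nat.cast_le.2 h)

theorem natCast_add_le (m n : ℕ) : f ↑(m + n) ≤ f m + f n := by
  rw [Nat.cast_add]
  exact hf.add_le m.cast_nonneg n.cast_nonneg

theorem apply_ceil_le {x : ℝ} (hx : 1 ≤ x) : f ⌈x⌉₊ ≤ 2 * f x :=
  calc f ⌈x⌉₊ ≤ f (x + 1) :=
        hf.mono (Nat.cast_nonneg _) (Nat.ceil_lt_add_one (by linarith)).le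
    _ ≤ f x + f 1 := hf.add_le (by linarith) zero_le_one
    _ ≤ 2 * f x := by linarith [hf.mono zero_le_one hx]

end IsModulus

theorem cnt_zero (A : Set ℕ) : cnt A 0 = 0 := by
  simp [cnt]

open scoped Classical in
theorem cnt_succ (A : Set ℕ) (n : ℕ) :
    cnt A (n + 1) = cnt A n + if n + 1 ∈ A then 1 else 0 := by
  simp only [cnt, Finset.card_filter]
  exact Finset.sum_Icc_succ_top (by omega) _

theorem cnt_setOf_sub_one_lt {c : ℕ → ℕ} (h0 : c 0 = 0) (hc : Monotone c)
    (hstep : ∀ n, c (n + 1) ≤ c n + 1) (n : ℕ) : cnt {m | c (m - 1) < c m} n = c n := by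
  induction n with
  | zero => rw [cnt_zero, h0]
  | succ n ih =>
    have := hc (Nat.le_add_right n 1)
    have := hstep n
    rw [cnt_succ, ih]
    split_ifs with hn <;> simp only [Set.mem_ofPred_eq, Nat.add_sub_cancel] at hn <;> omega

theorem exists_le_lt_succ_of_strictMono {a : ℕ → ℕ} (ha : StrictMono a) {K n : ℕ}
    (hn : a K ≤ n) : ∃ k, K ≤ k ∧ a k ≤ n ∧ n < a (k + 1) := by
  have hex : ∃ j, n < a j := ⟨n + 1, n.lt_succ_self.trans_le (ha.id_le _)⟩
  have hKj : K < Nat.find hex := by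
    by_contra! hle
    exact (Nat.find_spec hex).not_ge ((ha.monotone hle).trans hn)
  refine ⟨Nat.find hex - 1, by omega, not_lt.1 (Nat.find_min hex (by omega)), ?_⟩
  rw [Nat.sub_add_cancel (by omega)]
  exact Nat.find_spec hex

/-- The least monotone `c : ℕ → ℕ` with increments at most one and `t k ≤ c (a k)` for all `k`:
it climbs with slope one to height `t k` at time `a k`. -/
noncomputable def rampCount (a t : ℕ → ℕ) (n : ℕ) : ℕ := ⨆ k, t k - (a k - n)

section rampCount

variable {a t : ℕ → ℕ}

theorem strictMono_of_add_lt (hat : ∀ k, a k + t (k + 1) < a (k + 1)) : StrictMono a :=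
  strictMono_nat_of_lt_succ fun k => by have := hat k; omega

section
variable (hta : ∀ k, t k ≤ a k)
include hta

theorem bddAbove_range_rampCount (n : ℕ) : BddAbove (Set.range fun k => t k - (a k - n)) :=
  ⟨n, by rintro _ ⟨k, rfl⟩; have := hta k; dsimp only; omega⟩

theorem rampCount_le_self (n : ℕ) : rampCount a t n ≤ n :=
  ciSup_le fun k => by have := hta k; omega

theorem sub_le_rampCount (k n : ℕ) : t k - (a k - n) ≤ rampCount a t n :=
  le_ciSup (bddAbove_range_rampCount hta n) k

theorem le_rampCount (k : ℕ) : t k ≤ rampCount a t (a k) := by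
  simpa using sub_le_rampCount hta k (a k)

theorem monotone_rampCount : Monotone (rampCount a t) := fun _ n hmn =>
  ciSup_mono (bddAbove_range_rampCount hta n) fun k => by omega

theorem rampCount_succ_le (n : ℕ) : rampCount a t (n + 1) ≤ rampCount a t n + 1 :=
  ciSup_le fun k => by
    have := sub_le_rampCount hta k n
    omega

end

theorem rampCount_le_max (hat : ∀ k, a k + t (k + 1) < a (k + 1)) (ht : Monotone t) {k n : ℕ}
    (hnk : n < a (k + 1)) :
    rampCount a t n ≤ max (t k) (t (k + 1) - (a (k + 1) - n)) :=
  ciSup_le fun j => by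
    rcases lt_trichotomy j (k + 1) with hj | rfl | hj
    · have := ht (Nat.le_of_lt_succ hj)
      omega
    · exact le_max_right _ _
    · obtain ⟨i, rfl⟩ : ∃ i, j = i + 1 := ⟨j - 1, by omega⟩
      have := hat i
      have := (strictMono_of_add_lt hat).monotone (show k + 1 ≤ i by omega)
      omega

variable {f : ℝ → ℝ}

theorem apply_rampCount_le (hf : IsModulus f) (hat : ∀ k, a k + t (k + 1) < a (k + 1))
    (ht : Monotone t) {k n : ℕ} (hkn : a k ≤ n) (hnk : n < a (k + 1)) {ε : ℝ} (hε₀ : 0 ≤ ε)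
    (hε : ε ≤ 1 / 2) (hk : f (t k) ≤ ε * f (a k)) (hk' : f (t (k + 1)) ≤ ε * f (a (k + 1))) :
    f (rampCount a t n) ≤ 2 * ε * f n := by
  have hmax := rampCount_le_max hat ht hnk
  have hfn := hf.nonneg n.cast_nonneg
  rcases le_or_gt (t (k + 1) - (a (k + 1) - n)) (t k) with hflat | hramp
  · calc f (rampCount a t n) ≤ f (t k) := hf.natCast_mono (by omega)
      _ ≤ ε * f (a k) := hk
      _ ≤ ε * f n := by gcongr; exact hf.natCast_mono hkn
      _ ≤ 2 * ε * f n := by nlinarith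
  · -- On the ramp `a (k + 1) ≤ n + t (k + 1)`, while `2 * f (t (k + 1)) ≤ f (a (k + 1))`.
    have hsplit : f (a (k + 1)) ≤ f n + f (t (k + 1)) :=
      (hf.natCast_mono (by omega)).trans (hf.natCast_add_le _ _)
    have hfa : f (a (k + 1)) ≤ 2 * f n := by
      nlinarith [mul_le_mul_of_nonneg_right hε (hf.nonneg (a (k + 1)).cast_nonneg)]
    calc f (rampCount a t n) ≤ f (t (k + 1)) := hf.natCast_mono (by omega)
      _ ≤ ε * f (a (k + 1)) := hk'
      _ ≤ ε * (2 * f n) := by gcongr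
      _ = 2 * ε * f n := by ring

theorem tendsto_rampCount_div (hf : IsModulus f) (hat : ∀ k, a k + t (k + 1) < a (k + 1))
    (ht : Monotone t) (hsmall : ∀ ε > 0, ∀ᶠ k in atTop, f (t k) ≤ ε * f (a k)) :
    Tendsto (fun n : ℕ => f (rampCount a t n) / f n) atTop (𝓝 0) := by
  refine tendsto_order.2 ⟨fun δ hδ => Eventually.of_forall fun n =>
    hδ.trans_le (div_nonneg (hf.nonneg (Nat.cast_nonneg _)) (hf.nonneg n.cast_nonneg)),
    fun δ hδ => ?_⟩
  set ε := min δ 1 / 4 with hε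
  obtain ⟨K, hK⟩ := eventually_atTop.1 (hsmall ε (by positivity))
  filter_upwards [eventually_ge_atTop (max (a K) 1)] with n hn
  obtain ⟨k, hKk, hkn, hnk⟩ :=
    exists_le_lt_succ_of_strictMono (strictMono_of_add_lt hat) (le_of_max_le_left hn)
  have hfn : 0 < f n := hf.pos (by exact_mod_cast (le_of_max_le_right hn))
  rw [div_lt_iff₀ hfn]
  calc f (rampCount a t n) ≤ 2 * ε * f n :=
        apply_rampCount_le hf hat ht hkn hnk (by positivity)
          (by rw [hε]; linarith [min_le_right δ 1]) (hK k hKk) (hK (k + 1) (by omega))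
    _ < δ * f n := by
        gcongr
        rw [hε]
        linarith [min_le_left δ 1]

end rampCount

section Weight

variable {f : ℝ → ℝ} {g : ℕ → ℝ}

theorem Zd_subset_Zd_natCast (h : Tendsto (fun n : ℕ => f n / f (g n)) atTop atTop) :
    Zd f g ⊆ Zd f (fun n => (n : ℝ)) := by
  intro A hA
  have hprod := hA.mul h.inv_tendsto_atTop
  rw [zero_mul] at hprod
  refine hprod.congr' ?_
  filter_upwards [h.eventually_gt_atTop 0] with n hn
  have hfg : f (g n) ≠ 0 := by
    rintro h0
    simp [h0] at hn
  simp only [Pi.inv_apply, inv_div]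
  field_simp

theorem notMem_Zd_of_frequently_le_cnt (hf : IsModulus f) (hg : Tendsto g atTop atTop)
    {A : Set ℕ} (hA : ∃ᶠ n in atTop, g n ≤ cnt A n) : A ∉ Zd f g := by
  intro hZ
  obtain ⟨n, hle, hlt, hg₀⟩ :=
    (hA.and_eventually ((hZ.eventually (gt_mem_nhds one_pos)).and
      (hg.eventually_gt_atTop 0))).exists
  rw [div_lt_one (hf.pos hg₀)] at hlt
  exact (hf.mono hg₀.le hle).not_gt hlt

variable (hf : IsModulus f) (hg : Tendsto g atTop atTop)
  (h : Tendsto (fun n : ℕ => f n / f (g n)) atTop atTop)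
include hf hg h

theorem eventually_add_ceil_lt (B : ℕ) : ∀ᶠ n in atTop, B + ⌈g n⌉₊ < n := by
  filter_upwards [h.eventually_gt_atTop 2, hg.eventually_ge_atTop ((B : ℝ) + 1)]
    with n hratio hgn
  have hB : (0 : ℝ) ≤ B := B.cast_nonneg
  have hfg : 0 < f (g n) := hf.pos (by linarith)
  rw [lt_div_iff₀ hfg] at hratio
  by_contra! hn
  have hceil := Nat.ceil_lt_add_one (show 0 ≤ g n by linarith)
  have hnle : (n : ℝ) ≤ g n + (B + 1) := by
    have : (n : ℝ) ≤ B + ⌈g n⌉₊ := by exact_mod_cast hn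
    linarith
  have : f n ≤ 2 * f (g n) :=
    calc f n ≤ f (g n + (B + 1)) := hf.mono n.cast_nonneg hnle
      _ ≤ f (g n) + f (B + 1) := hf.add_le (by linarith) (by linarith)
      _ ≤ 2 * f (g n) := by linarith [hf.mono (by linarith) hgn]
  linarith

theorem eventually_ceil_le_mul {ε : ℝ} (hε : 0 < ε) :
    ∀ᶠ m in atTop, f ⌈g m⌉₊ ≤ ε * f m := by
  filter_upwards [hg.eventually_ge_atTop 1, h.eventually_ge_atTop (2 / ε)] with m hgm hratio
  rw [le_div_iff₀ (hf.pos (one_pos.trans_le hgm)), div_mul_eq_mul_div, div_le_iff₀ hε]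
    at hratio
  linarith [hf.apply_ceil_le hgm]

theorem exists_sparse_seq : ∃ a : ℕ → ℕ, (∀ k, ⌈g (a k)⌉₊ ≤ a k) ∧
    Monotone (fun k => ⌈g (a k)⌉₊) ∧ ∀ k, a k + ⌈g (a (k + 1))⌉₊ < a (k + 1) := by
  choose F hFg hFlt using fun B : ℕ =>
    ((hg.eventually_ge_atTop (B : ℝ)).and (eventually_add_ceil_lt hf hg h B)).exists
  -- The threshold `b (k + 1) = a k + ⌈g (a k)⌉₊` dominates both `a k` and `g (a k)`.
  let b : ℕ → ℕ := fun k => Nat.rec 0 (fun _ m => F m + ⌈g (F m)⌉₊) k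
  refine ⟨fun k => F (b k), fun k => by dsimp only; have := hFlt (b k); omega,
    monotone_nat_of_le_succ fun k => Nat.ceil_mono ?_,
    fun k => by
      have hb : b (k + 1) = F (b k) + ⌈g (F (b k))⌉₊ := rfl
      have := hFlt (b (k + 1))
      dsimp only
      omega⟩
  calc g (F (b k)) ≤ ⌈g (F (b k))⌉₊ := Nat.le_ceil _
    _ ≤ b (k + 1) := by exact_mod_cast Nat.le_add_left _ _
    _ ≤ g (F (b (k + 1))) := hFg _

end Weight

theorem stmt5 (f : ℝ → ℝ) (hf : IsUnboundedModulus f) (g : ℕ → ℝ) (hg : IsWeight g)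
    (h : Tendsto (fun n : ℕ => f n / f (g n)) atTop atTop) :
    Zd f g ⊂ Zd f (fun n => (n : ℝ)) := by
  obtain ⟨a, hta, ht, hat⟩ := exists_sparse_seq hf.1 hg.2.1 h
  set t : ℕ → ℕ := fun k => ⌈g (a k)⌉₊
  set c := rampCount a t
  have ha := (strictMono_of_add_lt (t := t) hat).tendsto_atTop
  have hcnt : cnt {m | c (m - 1) < c m} = c := funext <|
    cnt_setOf_sub_one_lt (Nat.le_zero.1 (rampCount_le_self hta 0)) (monotone_rampCount hta)
      (rampCount_succ_le hta)
  refine (ssubset_iff_of_subset (Zd_subset_Zd_natCast h)).2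
    ⟨{m | c (m - 1) < c m}, ?_, notMem_Zd_of_frequently_le_cnt hf.1 hg.2.1 ?_⟩
  · show Tendsto (fun n => f (cnt _ n) / f n) atTop (𝓝 0)
    rw [hcnt]
    exact tendsto_rampCount_div hf.1 hat ht fun ε hε =>
      ha.eventually (eventually_ceil_le_mul hf.1 hg.2.1 h hε)
  · rw [hcnt]
    exact ha.frequently (Frequently.of_forall fun k =>
      (Nat.le_ceil _).trans (Nat.cast_le.2 (le_rampCount hta k)))
end

section
/- For every unbounded modulus function f and weight function g, and every arithmetic sequence (a_n), the subgroup t^{f,g}_{(a_n)}(𝕋) has cardinality 𝔠 (the continuum). -/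
open Filter Set

/-- The `f^g`-statistically characterized subgroup `t^{f,g}_{(a_n)}(𝕋)`. -/
noncomputable def statChar (f : ℝ → ℝ) (g : ℕ → ℝ) (a : ℕ → ℤ) :
    Set (AddCircle (1 : ℝ)) :=
  {x | ∀ ε > 0, {n : ℕ | ε ≤ ‖(a n) • x‖} ∈ Zd f g}

/-- An arithmetic sequence: `a 0 = 1`, strictly increasing, `a n ∣ a (n+1)`,
and all ratios `q_n ≥ 2`. -/
def IsArith (a : ℕ → ℕ) : Prop :=
  a 0 = 1 ∧ StrictMono a ∧ (∀ n, a n ∣ a (n + 1)) ∧ (∀ n, 2 * a n ≤ a (n + 1))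

/-- Canonical representation `x = Σ_{n≥1} c_n / a_n` with `0 ≤ c_n ≤ q_n - 1`
and `c_n < q_n - 1` infinitely often; here `q_n = a n / a (n-1)`. -/
def IsCanonRep (a : ℕ → ℕ) (c : ℕ → ℕ) (x : AddCircle (1 : ℝ)) : Prop :=
  c 0 = 0 ∧ (∀ n, 1 ≤ n → c n ≤ a n / a (n - 1) - 1) ∧
  (∀ N, ∃ n, N ≤ n ∧ c n < a n / a (n - 1) - 1) ∧
  x = ((∑' n, (c n : ℝ) / (a n : ℝ) : ℝ) : AddCircle (1 : ℝ))

/-!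
Put `x_S = ∑_{m ∈ S} 1 / a (k m)` for `S ⊆ ℕ`, where `k` grows with ever larger gaps. The weights
decay geometrically, so distinct `S` give distinct points of `𝕋`. For `k m ≤ n` the number
`a n / a (k m)` is an integer, and for `k m > n` it is at most `2^(n - k m)`; hence
`‖a n x_S‖ ≤ 2^(-L)` unless some `k j` lies in `(n, n + L]`, which happens for at most `(m + 2) L`
values `n < k (m + 1)`. Choosing `k` so sparse that `f (g n) ≥ m f ((m + 2)^2)` for `n ≥ k m`
makes these exceptional sets `f`-density zero.
-/

namespace IsArith

variable {a : ℕ → ℕ}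

lemma pos (ha : IsArith a) (n : ℕ) : 0 < a n :=
  lt_of_lt_of_le (by rw [ha.1]; exact one_pos) (ha.2.1.monotone (Nat.zero_le n))

lemma dvd_of_le (ha : IsArith a) {i j : ℕ} (hij : i ≤ j) : a i ∣ a j :=
  Nat.le_induction dvd_rfl (fun j _ ih => ih.trans (ha.2.2.1 j)) j hij

lemma two_pow_mul_le (ha : IsArith a) {i j : ℕ} (hij : i ≤ j) : 2 ^ (j - i) * a i ≤ a j := by
  induction j, hij using Nat.le_induction with
  | base => simp
  | succ j hij ih =>
    rw [Nat.sub_add_comm hij, pow_succ']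
    linarith [ha.2.2.2 j]

lemma div_le_inv_two_pow (ha : IsArith a) {i j : ℕ} (hij : i ≤ j) :
    (a i : ℝ) / a j ≤ 2⁻¹ ^ (j - i) := by
  rw [div_le_iff₀ (by exact_mod_cast ha.pos j), inv_pow, inv_mul_eq_div,
    le_div_iff₀ (by positivity)]
  exact_mod_cast (mul_comm (a i) _).trans_le (ha.two_pow_mul_le hij)

end IsArith

section Decay

variable {w : ℕ → ℝ}

lemma le_geometric_of_decay (hw : ∀ m, 3 * w (m + 1) ≤ w m) (j : ℕ) : w j ≤ w 0 * 3⁻¹ ^ j := by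
  induction j with
  | zero => simp
  | succ j ih => rw [pow_succ, ← mul_assoc]; linarith [hw j]

lemma summable_of_decay (hw0 : ∀ m, 0 ≤ w m) (hw : ∀ m, 3 * w (m + 1) ≤ w m) : Summable w :=
  .of_nonneg_of_le hw0 (le_geometric_of_decay hw)
    ((summable_geometric_of_lt_one (by norm_num) (by norm_num)).mul_left _)

lemma tsum_le_of_decay (hw0 : ∀ m, 0 ≤ w m) (hw : ∀ m, 3 * w (m + 1) ≤ w m) :
    ∑' j, w j ≤ 3 / 2 * w 0 := by
  calc ∑' j, w j ≤ ∑' j, w 0 * 3⁻¹ ^ j :=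
        (summable_of_decay hw0 hw).tsum_le_tsum (le_geometric_of_decay hw)
          ((summable_geometric_of_lt_one (by norm_num) (by norm_num)).mul_left _)
    _ = 3 / 2 * w 0 := by
        rw [tsum_mul_left, tsum_geometric_of_lt_one (by norm_num) (by norm_num)]
        ring

/-- At the first index where two subsets differ, the weight there outweighs the sum of all later
weights. -/
lemma injective_tsum_indicator_of_decay (hpos : ∀ m, 0 < w m) (hw : ∀ m, 3 * w (m + 1) ≤ w m) :
    Function.Injective fun S : Set ℕ => ∑' m, S.indicator w m := by
  classical
  intro S S' hSS'
  by_contra hne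
  have hdiff : ∃ m, ¬(m ∈ S ↔ m ∈ S') := by
    by_contra! h
    exact hne (Set.ext h)
  set m₀ := Nat.find hdiff
  have hw0 : ∀ m, 0 ≤ w m := fun m => (hpos m).le
  have hsum := summable_of_decay hw0 hw
  set d : ℕ → ℝ := fun j => S.indicator w j - S'.indicator w j
  have hd_sum : Summable d := (hsum.indicator S).sub (hsum.indicator S')
  have hd_abs : ∀ j, |d j| ≤ w j := fun j => by
    simp only [d, Set.indicator]; split_ifs <;> simp [abs_of_pos (hpos j), (hpos j).le]
  have hd_lt : ∀ j < m₀, d j = 0 := fun j hj => by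
    simp [d, Set.indicator, not_not.mp (Nat.find_min hdiff hj)]
  have hd_m₀ : |d m₀| = w m₀ := by
    have h₀ : ¬(m₀ ∈ S ↔ m₀ ∈ S') := Nat.find_spec hdiff
    simp only [d, Set.indicator]
    split_ifs <;> first | tauto | simp [abs_of_pos (hpos m₀)]
  have hsplit : ∑' j, d j = d m₀ + ∑' j, d (j + (m₀ + 1)) := by
    rw [← hd_sum.sum_add_tsum_nat_add (m₀ + 1), Finset.sum_range_succ,
      Finset.sum_eq_zero fun j hj => hd_lt j (Finset.mem_range.mp hj), zero_add]
  have htail : |∑' j, d (j + (m₀ + 1))| ≤ w m₀ / 2 := by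
    have hw' : ∀ j, 3 * w (j + 1 + (m₀ + 1)) ≤ w (j + (m₀ + 1)) := fun j => by
      rw [add_right_comm]; exact hw _
    have hws := (summable_nat_add_iff (m₀ + 1)).mpr hsum
    have hds := (summable_nat_add_iff (m₀ + 1)).mpr hd_sum
    have hbound := tsum_le_of_decay (w := fun j => w (j + (m₀ + 1))) (fun j => hw0 _) hw'
    rw [zero_add] at hbound
    rw [abs_le]
    constructor
    · have := hws.neg.tsum_le_tsum (fun j => neg_le_of_abs_le (hd_abs _)) hds
      rw [tsum_neg] at this
      linarith [hw m₀]
    · have := hds.tsum_le_tsum (fun j => le_of_abs_le (hd_abs _)) hws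
      linarith [hw m₀]
  have hzero : ∑' j, d j = 0 := by
    rw [(hsum.indicator S).tsum_sub (hsum.indicator S')]
    exact sub_eq_zero.mpr hSS'
  have hd_m₀_le : |d m₀| ≤ w m₀ / 2 := by
    rwa [show d m₀ = -∑' j, d (j + (m₀ + 1)) by linarith, abs_neg]
  linarith [hpos m₀]

lemma tsum_indicator_mem_Ico (hw0 : ∀ m, 0 ≤ w m) (hw : ∀ m, 3 * w (m + 1) ≤ w m)
    (h0 : w 0 < 2 / 3) (S : Set ℕ) : ∑' m, S.indicator w m ∈ Ico (0 : ℝ) 1 := by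
  have hsum := summable_of_decay hw0 hw
  refine ⟨tsum_nonneg (Set.indicator_nonneg fun m _ => hw0 m), ?_⟩
  calc ∑' m, S.indicator w m ≤ ∑' m, w m :=
        (hsum.indicator S).tsum_le_tsum (Set.indicator_le_self' fun m _ => hw0 m) hsum
    _ ≤ 3 / 2 * w 0 := tsum_le_of_decay hw0 hw
    _ < 1 := by linarith

end Decay

section Gap

variable {k : ℕ → ℕ}

lemma strictMono_of_gap (hk : ∀ m, k m + m + 2 ≤ k (m + 1)) : StrictMono k :=
  strictMono_nat_of_lt_succ fun m => by linarith [hk m]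

lemma exists_gap_ge (N : ℕ → ℕ) :
    ∃ k : ℕ → ℕ, (∀ m, k m + m + 2 ≤ k (m + 1)) ∧ 1 ≤ k 0 ∧ ∀ m, N m ≤ k m := by
  refine ⟨fun m => ∑ i ∈ Finset.range (m + 1), (N i + i + 2), fun m => ?_, by simp, fun m => ?_⟩
  · dsimp only
    rw [Finset.sum_range_succ _ (m + 1)]
    omega
  · exact (Finset.single_le_sum (fun i _ => Nat.zero_le _) (Finset.self_mem_range_succ m)).trans'
      (by omega)

end Gap

lemma cnt_mono {A B : Set ℕ} (hAB : A ⊆ B) (n : ℕ) : cnt A n ≤ cnt B n :=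
  Finset.card_le_card fun x hx => by
    simp only [Finset.mem_filter] at hx ⊢
    exact ⟨hx.1, hAB hx.2⟩

lemma cnt_near_le {k : ℕ → ℕ} (hk : ∀ m, k m + m + 2 ≤ k (m + 1)) {L m n : ℕ} (hL : L ≤ m + 2)
    (hn : n < k (m + 1)) : cnt {n' | ∃ j, n' < k j ∧ k j ≤ n' + L} n ≤ (m + 2) * L := by
  classical
  unfold cnt
  calc _ ≤ ((Finset.range (m + 2)).biUnion fun j => Finset.Ico (k j - L) (k j)).card := by
        refine Finset.card_le_card fun n' hn' => ?_
        simp only [Finset.mem_filter, Finset.mem_Icc, Set.mem_ofPred_eq] at hn'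
        obtain ⟨⟨-, hn'n⟩, j, hj, hjL⟩ := hn'
        simp only [Finset.mem_biUnion, Finset.mem_range, Finset.mem_Ico]
        refine ⟨j, ?_, by omega, hj⟩
        by_contra! hj2
        have := (strictMono_of_gap hk).monotone hj2
        have : k (m + 1) + m + 3 ≤ k (m + 2) := hk (m + 1)
        omega
    _ ≤ (Finset.range (m + 2)).card * L :=
        Finset.card_biUnion_le_card_mul _ _ _ fun j _ => by simp only [Nat.card_Ico]; omega
    _ = (m + 2) * L := by rw [Finset.card_range]

lemma mem_Zd_of_cnt_le {f : ℝ → ℝ} {g : ℕ → ℝ} (hf : IsModulus f) (hg : ∀ n, 0 ≤ g n)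
    {k : ℕ → ℕ} (hk : StrictMono k)
    (hthr : ∀ m n, k m ≤ n → (m : ℝ) * f ((m + 2) ^ 2) ≤ f (g n)) {A : Set ℕ} {L : ℕ}
    (hA : ∀ m n, L ≤ m → k m ≤ n → n < k (m + 1) → cnt A n ≤ (m + 2) ^ 2) : A ∈ Zd f g := by
  obtain ⟨hf0, hf_eq_zero, -, hfmono, -⟩ := hf
  have hratio : ∀ m n, L ≤ m → 1 ≤ m → k m ≤ n → n < k (m + 1) →
      f (cnt A n) / f (g n) ≤ 1 / m := by
    intro m n hLm hm hmn hnm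
    have hpos : 0 < f ((m + 2) ^ 2) := (hf0 _ (by positivity)).lt_of_ne
      fun h => absurd ((hf_eq_zero _ (by positivity)).mp h.symm) (by positivity)
    have hcnt : f (cnt A n) ≤ f ((m + 2) ^ 2) :=
      hfmono _ _ (Nat.cast_nonneg _) (by exact_mod_cast hA m n hLm hmn hnm)
    calc f (cnt A n) / f (g n) ≤ f ((m + 2) ^ 2) / (m * f ((m + 2) ^ 2)) :=
          div_le_div₀ hpos.le hcnt (by positivity) (hthr m n hmn)
      _ = 1 / m := by field_simp
  rw [Zd, Set.mem_ofPred_eq, Metric.tendsto_atTop]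
  intro δ hδ
  obtain ⟨M, hM⟩ := exists_nat_gt δ⁻¹
  have hM0 : (0 : ℝ) < M := (inv_pos.mpr hδ).trans hM
  refine ⟨k (max M (L + 1)), fun n hn => ?_⟩
  obtain ⟨m, hmn, hnm⟩ := hk.exists_between_of_tendsto_atTop hk.tendsto_atTop
    (Nat.lt_succ_of_le ((hk.monotone (Nat.zero_le _)).trans hn))
  have hMm : max M (L + 1) ≤ m := Nat.lt_succ_iff.mp (hk.lt_iff_lt.mp (hn.trans_lt hnm))
  rw [Real.dist_eq, sub_zero,
    abs_of_nonneg (div_nonneg (hf0 _ (Nat.cast_nonneg _)) (hf0 _ (hg n)))]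
  calc f (cnt A n) / f (g n) ≤ 1 / m :=
        hratio m n (by omega) (by omega) (Nat.lt_succ_iff.mp hmn) (Nat.succ_le_iff.mp hnm)
    _ ≤ 1 / M := one_div_le_one_div_of_le hM0 (by exact_mod_cast le_of_max_le_left hMm)
    _ < δ := by rwa [one_div, inv_lt_comm₀ hM0 hδ]

lemma norm_coe_le_abs_sub_intCast (x : ℝ) (z : ℤ) : ‖(x : AddCircle (1 : ℝ))‖ ≤ |x - z| :=
  UnitAddCircle.norm_eq.trans_le (round_le x z)

section Lacunary

variable {a k : ℕ → ℕ}

noncomputable def lacunaryPoint (a k : ℕ → ℕ) (S : Set ℕ) : ℝ :=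
  ∑' m, S.indicator (fun m => ((a (k m) : ℝ))⁻¹) m

lemma three_mul_inv_le_of_gap (ha : IsArith a) (hk : ∀ m, k m + m + 2 ≤ k (m + 1)) (m : ℕ) :
    3 * ((a (k (m + 1)) : ℝ))⁻¹ ≤ ((a (k m) : ℝ))⁻¹ := by
  have hle : 3 * a (k m) ≤ a (k (m + 1)) :=
    calc 3 * a (k m) ≤ 2 ^ 2 * a (k m) := by omega
      _ ≤ 2 ^ (k (m + 1) - k m) * a (k m) :=
        Nat.mul_le_mul_right _ (Nat.pow_le_pow_right two_pos (by have := hk m; omega))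
      _ ≤ a (k (m + 1)) := ha.two_pow_mul_le (by have := hk m; omega)
  rw [← div_eq_mul_inv, div_le_iff₀ (by exact_mod_cast ha.pos _), inv_mul_eq_div,
    le_div_iff₀ (by exact_mod_cast ha.pos _)]
  exact_mod_cast hle

lemma lacunaryPoint_injective (ha : IsArith a) (hk : ∀ m, k m + m + 2 ≤ k (m + 1))
    (hk0 : 1 ≤ k 0) : Function.Injective fun S => (lacunaryPoint a k S : AddCircle (1 : ℝ)) := by
  have hpos : ∀ m, (0 : ℝ) < ((a (k m) : ℝ))⁻¹ := fun m => by
    have := ha.pos (k m)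
    positivity
  have h0 : ((a (k 0) : ℝ))⁻¹ < 2 / 3 := by
    have : 2 ≤ a (k 0) := (ha.1 ▸ ha.2.2.2 0).trans (ha.2.1.monotone hk0)
    rw [inv_lt_comm₀ (by positivity) (by norm_num)]
    exact (show ((2 / 3 : ℝ))⁻¹ < 2 by norm_num).trans_le (by exact_mod_cast this)
  have hmem := tsum_indicator_mem_Ico (fun m => (hpos m).le) (three_mul_inv_le_of_gap ha hk) h0
  intro S S' h
  dsimp only [lacunaryPoint] at h
  rw [AddCircle.coe_eq_coe_iff_of_mem_Ico (a := 0) (by simpa using hmem S)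
    (by simpa using hmem S')] at h
  exact injective_tsum_indicator_of_decay hpos (three_mul_inv_le_of_gap ha hk) h

/-- The terms with `k m ≤ n` contribute integers, since then `a (k m) ∣ a n`; those with
`k m > n + L` add up to at most `2⁻¹ ^ L`. -/
lemma norm_zsmul_lacunaryPoint_le (ha : IsArith a) (hk : ∀ m, k m + m + 2 ≤ k (m + 1))
    (S : Set ℕ) {n L : ℕ} (hfar : ∀ j, n < k j → n + L < k j) :
    ‖(a n : ℤ) • (lacunaryPoint a k S : AddCircle (1 : ℝ))‖ ≤ 2⁻¹ ^ L := by
  classical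
  have hmono := strictMono_of_gap hk
  have hex : ∃ M, n < k M := ⟨n + 1, n.lt_succ_self.trans_le (hmono.id_le _)⟩
  set M := Nat.find hex
  set w : ℕ → ℝ := fun m => ((a (k m) : ℝ))⁻¹
  set u : ℕ → ℝ := fun m => (a n : ℝ) * S.indicator w m
  have hw0 : ∀ m, 0 ≤ w m := fun m => inv_nonneg.mpr (Nat.cast_nonneg _)
  have hu : Summable u :=
    ((summable_of_decay hw0 (three_mul_inv_le_of_gap ha hk)).indicator S).mul_left _
  obtain ⟨z, hz⟩ : ∃ z : ℕ, ∑ m ∈ Finset.range M, u m = z := by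
    refine ⟨∑ m ∈ Finset.range M, S.indicator (fun m => a n / a (k m)) m, ?_⟩
    rw [Nat.cast_sum]
    refine Finset.sum_congr rfl fun m hm => ?_
    have hkm : k m ≤ n := not_lt.mp (Nat.find_min hex (Finset.mem_range.mp hm))
    simp only [u, w, Set.indicator]
    split_ifs
    · rw [Nat.cast_div (ha.dvd_of_le hkm) (Nat.cast_ne_zero.mpr (ha.pos _).ne'), div_eq_mul_inv]
    · simp
  have hterm : ∀ j, u (j + M) ≤ 2⁻¹ ^ (L + 1) * 2⁻¹ ^ j := fun j => by
    have hfar' : n + L + 1 + j ≤ k (j + M) := by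
      have := hfar M (Nat.find_spec hex)
      have := hmono.add_le_nat j M
      omega
    calc u (j + M) ≤ (a n : ℝ) * w (j + M) :=
          mul_le_mul_of_nonneg_left (Set.indicator_le_self' (fun m _ => hw0 m) _)
            (Nat.cast_nonneg _)
      _ ≤ 2⁻¹ ^ (k (j + M) - n) := ha.div_le_inv_two_pow (by omega)
      _ ≤ 2⁻¹ ^ (L + 1 + j) := pow_le_pow_of_le_one (by norm_num) (by norm_num) (by omega)
      _ = 2⁻¹ ^ (L + 1) * 2⁻¹ ^ j := pow_add _ _ _
  set T := ∑' j, u (j + M)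
  have hT0 : 0 ≤ T := tsum_nonneg fun j =>
    mul_nonneg (Nat.cast_nonneg _) (Set.indicator_nonneg (fun m _ => hw0 m) _)
  have hTle : T ≤ 2⁻¹ ^ L :=
    calc T ≤ ∑' j : ℕ, (2⁻¹ : ℝ) ^ (L + 1) * 2⁻¹ ^ j :=
          ((summable_nat_add_iff M).mpr hu).tsum_le_tsum hterm
            ((summable_geometric_of_lt_one (by norm_num) (by norm_num)).mul_left _)
      _ = 2⁻¹ ^ L := by rw [tsum_mul_left, tsum_geometric_inv_two, pow_succ]; ring
  have hsmul : (a n : ℤ) • (lacunaryPoint a k S : AddCircle (1 : ℝ)) =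
      ((z + T : ℝ) : AddCircle (1 : ℝ)) := by
    rw [← AddCircle.coe_zsmul, zsmul_eq_mul, ← hz, hu.sum_add_tsum_nat_add, lacunaryPoint,
      ← tsum_mul_left]
    push_cast
    rfl
  calc _ ≤ |(z + T : ℝ) - (z : ℤ)| := hsmul ▸ norm_coe_le_abs_sub_intCast _ z
    _ = T := by rw [Int.cast_natCast, add_sub_cancel_left, abs_of_nonneg hT0]
    _ ≤ 2⁻¹ ^ L := hTle

lemma lacunaryPoint_mem_statChar {f : ℝ → ℝ} {g : ℕ → ℝ} (hf : IsModulus f)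
    (hg : ∀ n, 0 ≤ g n) (ha : IsArith a) (hk : ∀ m, k m + m + 2 ≤ k (m + 1))
    (hthr : ∀ m n, k m ≤ n → (m : ℝ) * f ((m + 2) ^ 2) ≤ f (g n)) (S : Set ℕ) :
    (lacunaryPoint a k S : AddCircle (1 : ℝ)) ∈ statChar f g (fun n => (a n : ℤ)) := by
  intro ε hε
  obtain ⟨L, hL⟩ := exists_pow_lt_of_lt_one hε (by norm_num : (2⁻¹ : ℝ) < 1)
  have hnear : {n | ε ≤ ‖(a n : ℤ) • (lacunaryPoint a k S : AddCircle (1 : ℝ))‖} ⊆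
      {n | ∃ j, n < k j ∧ k j ≤ n + L} := by
    intro n hn
    by_contra hfar
    simp only [Set.mem_ofPred_eq, not_exists, not_and, not_le] at hn hfar
    exact (hn.trans (norm_zsmul_lacunaryPoint_le ha hk S hfar)).not_gt hL
  refine mem_Zd_of_cnt_le hf hg (strictMono_of_gap hk) hthr (L := L) fun m n hLm _ hn => ?_
  calc _ ≤ cnt {n | ∃ j, n < k j ∧ k j ≤ n + L} n := cnt_mono hnear n
    _ ≤ (m + 2) * L := cnt_near_le hk (by omega) hn
    _ ≤ (m + 2) ^ 2 := by nlinarith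

end Lacunary

theorem stmt13 (f : ℝ → ℝ) (hf : IsUnboundedModulus f) (g : ℕ → ℝ) (hg : IsWeight g)
    (a : ℕ → ℕ) (ha : IsArith a) :
    Cardinal.mk ↥(statChar f g (fun n => (a n : ℤ))) = Cardinal.continuum := by
  have hfg : Tendsto (fun n => f (g n)) atTop atTop := hf.2.comp hg.2.1
  choose N hN using fun m : ℕ =>
    eventually_atTop.mp (hfg.eventually_ge_atTop ((m : ℝ) * f ((m + 2) ^ 2)))
  obtain ⟨k, hk, hk0, hNk⟩ := exists_gap_ge N
  have hmem := lacunaryPoint_mem_statChar hf.1 hg.1 ha hk fun m n hn => hN m n ((hNk m).trans hn)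
  apply le_antisymm
  · calc Cardinal.mk ↥(statChar f g (fun n => (a n : ℤ))) ≤ Cardinal.mk (AddCircle (1 : ℝ)) :=
          Cardinal.mk_subtype_le _
      _ ≤ Cardinal.mk ℝ := Cardinal.mk_le_of_surjective QuotientAddGroup.mk_surjective
      _ = Cardinal.continuum := Cardinal.mk_real
  · rw [← Cardinal.mk_set_nat]
    exact Cardinal.mk_le_of_injective (f := fun S => ⟨_, hmem S⟩)
      fun S S' h => lacunaryPoint_injective ha hk hk0 (congrArg Subtype.val h)
end
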